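/- arXiv:1205.7010 — 2 statements merged into one kernel-verified Lean document; each statement's English description precedes it below -/
import Mathlib

section
/- A linear map u : H_4 → H_4 is a Hopf algebra morphism if and only if either u is the trivial morphism u(h) = ε(h)1 for all h ∈ H_4, or there exists β ∈ k such that u(1) = 1, u(g) = g, u(x) = βx, and u(gx) = βgx. -/
/-!
A bialgebra map `u` sends the group-like element `g` to a group-like element, and the only
group-like elements of `H₄` are `1` and `g`. It also sends the `(1, g)`-skew-primitive `x` to a
`(1, u g)`-skew-primitive of square zero. If `u g = 1`, then `u x` is primitive, and `H₄` has no
nonzero primitives, so `u` kills `x` and `g x` and is `h ↦ ε(h) 1`. If `u g = g`, the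
`(1, g)`-skew-primitives are the combinations `a (1 - g) + c x`, whose square is
`2 a (a (1 - g) + c x)`; as `2 ≠ 0`, `u x` squares to zero only if `a = 0`.
-/

open TensorProduct

noncomputable section

/-- A linear map between coalgebras is a coalgebra morphism if it commutes with
counits and comultiplications. -/
def IsCoalgebraMap (k : Type*) [CommRing k] {A B : Type*} [AddCommGroup A] [Module k A]
    [Coalgebra k A] [AddCommGroup B] [Module k B] [Coalgebra k B] (u : A →ₗ[k] B) : Prop :=
  Coalgebra.counit (R := k) ∘ₗ u = Coalgebra.counit (R := k) ∧
    Coalgebra.comul (R := k) ∘ₗ u = TensorProduct.map u u ∘ₗ Coalgebra.comul (R := k)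

/-- `H` is (a model of) Sweedler's 4-dimensional Hopf algebra `H₄` with generators `g`, `x`:
`g² = 1`, `x² = 0`, `xg = -gx`, the family `{1, g, x, gx}` is a basis of `H`, `g` is
group-like, `x` is `(1, g)`-primitive, and `S(g) = g`, `S(x) = -gx`. -/
structure IsSweedler (k : Type*) [CommRing k] (H : Type*) [Ring H] [HopfAlgebra k H]
    (g x : H) : Prop where
  g_sq : g * g = 1
  x_sq : x * x = 0
  x_mul_g : x * g = -(g * x)
  li : LinearIndependent k ![(1 : H), g, x, g * x]
  span : Submodule.span k {(1 : H), g, x, g * x} = ⊤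
  comul_g : Coalgebra.comul (R := k) g = g ⊗ₜ[k] g
  comul_x : Coalgebra.comul (R := k) x = x ⊗ₜ[k] (1 : H) + g ⊗ₜ[k] x
  counit_g : Coalgebra.counit (R := k) g = 1
  counit_x : Coalgebra.counit (R := k) x = 0
  antipode_g : HopfAlgebra.antipode (R := k) g = g
  antipode_x : HopfAlgebra.antipode (R := k) x = -(g * x)

structure IsBialgebraMap (k : Type*) [CommRing k] {A B : Type*} [Ring A] [Ring B]
    [Bialgebra k A] [Bialgebra k B] (u : A →ₗ[k] B) : Prop where
  map_one : u 1 = 1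
  map_mul (a b : A) : u (a * b) = u a * u b
  isCoalgebraMap : IsCoalgebraMap k u

section

variable {k : Type*} [CommRing k]

lemma IsCoalgebraMap.isGroupLikeElem_map {A B : Type*} [AddCommGroup A] [Module k A]
    [Coalgebra k A] [AddCommGroup B] [Module k B] [Coalgebra k B] {u : A →ₗ[k] B}
    (hu : IsCoalgebraMap k u) {a : A} (ha : IsGroupLikeElem k a) : IsGroupLikeElem k (u a) where
  counit_eq_one := by rw [← LinearMap.comp_apply, hu.1, ha.counit_eq_one]
  comul_eq_tmul_self := by
    rw [← LinearMap.comp_apply, hu.2, LinearMap.comp_apply, ha.comul_eq_tmul_self, map_tmul]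

lemma LinearMap.map_mul_of_basis {ι A B : Type*} [Ring A] [Algebra k A] [Ring B] [Algebra k B]
    (b : Module.Basis ι k A) (u : A →ₗ[k] B) (h : ∀ i j, u (b i * b j) = u (b i) * u (b j))
    (a c : A) : u (a * c) = u a * u c :=
  LinearMap.congr_fun₂
    (LinearMap.ext_basis b b (B := (LinearMap.mul k A).compr₂ u)
      (B' := (LinearMap.mul k B).compl₁₂ u u) h) a c

lemma BialgHom.isBialgebraMap {A B : Type*} [Ring A] [Ring B] [Bialgebra k A] [Bialgebra k B]
    (f : A →ₐc[k] B) : IsBialgebraMap k (f : A →ₗ[k] B) :=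
  ⟨map_one f, map_mul f, f.counit_comp, f.map_comp_comul.symm⟩

lemma isBialgebraMap_iff {A B : Type*} [Ring A] [Ring B] [Bialgebra k A] [Bialgebra k B]
    {u : A →ₗ[k] B} :
    IsBialgebraMap k u ↔ u 1 = 1 ∧ (∀ a b : A, u (a * b) = u a * u b) ∧ IsCoalgebraMap k u :=
  ⟨fun ⟨h1, hmul, hc⟩ => ⟨h1, hmul, hc⟩, fun ⟨h1, hmul, hc⟩ => ⟨h1, hmul, hc⟩⟩

lemma isBialgebraMap_of_eq_counit_smul_one {A : Type*} [Ring A] [Bialgebra k A] {u : A →ₗ[k] A}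
    (hu : ∀ a, u a = Coalgebra.counit (R := k) a • (1 : A)) : IsBialgebraMap k u := by
  convert ((Bialgebra.unitBialgHom k A).comp (Bialgebra.counitBialgHom k A)).isBialgebraMap
  ext a
  rw [hu, Algebra.smul_def, mul_one]
  rfl

end

namespace IsSweedler

variable {k : Type*} [CommRing k] {H : Type*} [Ring H] [HopfAlgebra k H] {g x : H}

def basis (hs : IsSweedler k H g x) : Module.Basis (Fin 4) k H :=
  .mk hs.li <| by
    simpa only [Matrix.range_cons, Matrix.range_empty, Set.union_empty, Set.singleton_union]
      using hs.span.ge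

@[simp] lemma basis_zero (hs : IsSweedler k H g x) : hs.basis 0 = 1 := by simp [basis]
@[simp] lemma basis_one (hs : IsSweedler k H g x) : hs.basis 1 = g := by simp [basis]
@[simp] lemma basis_two (hs : IsSweedler k H g x) : hs.basis 2 = x := by simp [basis]
@[simp] lemma basis_three (hs : IsSweedler k H g x) : hs.basis 3 = g * x := by simp [basis]

@[simp] lemma repr_one (hs : IsSweedler k H g x) : hs.basis.repr 1 = Finsupp.single 0 1 := by
  simpa using hs.basis.repr_self 0
@[simp] lemma repr_g (hs : IsSweedler k H g x) : hs.basis.repr g = Finsupp.single 1 1 := by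
  simpa using hs.basis.repr_self 1
@[simp] lemma repr_x (hs : IsSweedler k H g x) : hs.basis.repr x = Finsupp.single 2 1 := by
  simpa using hs.basis.repr_self 2
@[simp] lemma repr_gx (hs : IsSweedler k H g x) :
    hs.basis.repr (g * x) = Finsupp.single 3 1 := by
  simpa using hs.basis.repr_self 3

lemma exists_eq_linearCombination (hs : IsSweedler k H g x) (y : H) :
    ∃ a b c d : k, y = a • (1 : H) + b • g + c • x + d • (g * x) :=
  ⟨hs.basis.repr y 0, hs.basis.repr y 1, hs.basis.repr y 2, hs.basis.repr y 3, by
    conv_lhs => rw [← hs.basis.sum_repr y]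
    rw [Fin.sum_univ_four, hs.basis_zero, hs.basis_one, hs.basis_two, hs.basis_three]⟩

lemma g_mul_gx (hs : IsSweedler k H g x) : g * (g * x) = x := by
  rw [← mul_assoc, hs.g_sq, one_mul]

lemma gx_mul_g (hs : IsSweedler k H g x) : g * x * g = -x := by
  rw [mul_assoc, hs.x_mul_g, mul_neg, hs.g_mul_gx]

lemma x_mul_gx (hs : IsSweedler k H g x) : x * (g * x) = 0 := by
  rw [← mul_assoc, ← neg_neg (x * g), hs.x_mul_g, neg_neg, neg_mul, mul_assoc, hs.x_sq,
    mul_zero, neg_zero]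

lemma gx_mul_x (hs : IsSweedler k H g x) : g * x * x = 0 := by
  rw [mul_assoc, hs.x_sq, mul_zero]

lemma gx_mul_gx (hs : IsSweedler k H g x) : g * x * (g * x) = 0 := by
  rw [← mul_assoc, hs.gx_mul_g, neg_mul, hs.x_sq, neg_zero]

lemma comul_gx (hs : IsSweedler k H g x) :
    Coalgebra.comul (R := k) (g * x) = (g * x) ⊗ₜ[k] g + (1 : H) ⊗ₜ[k] (g * x) := by
  rw [Bialgebra.comul_mul, hs.comul_g, hs.comul_x, mul_add,
    Algebra.TensorProduct.tmul_mul_tmul, Algebra.TensorProduct.tmul_mul_tmul,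
    mul_one, hs.g_sq]

lemma counit_gx (hs : IsSweedler k H g x) : Coalgebra.counit (R := k) (g * x) = 0 := by
  rw [Bialgebra.counit_mul, hs.counit_x, mul_zero]

lemma counit_linearCombination (hs : IsSweedler k H g x) (a b c d : k) :
    Coalgebra.counit (R := k) (a • (1 : H) + b • g + c • x + d • (g * x)) = a + b := by
  simp [hs.counit_g, hs.counit_x, hs.counit_gx]

lemma comul_linearCombination (hs : IsSweedler k H g x) (a b c d : k) :
    Coalgebra.comul (R := k) (a • (1 : H) + b • g + c • x + d • (g * x)) =
      a • (1 : H) ⊗ₜ[k] (1 : H) + b • g ⊗ₜ[k] g + c • (x ⊗ₜ[k] (1 : H) + g ⊗ₜ[k] x) +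
        d • ((g * x) ⊗ₜ[k] g + (1 : H) ⊗ₜ[k] (g * x)) := by
  simp [hs.comul_g, hs.comul_x, hs.comul_gx, Algebra.TensorProduct.one_def]

theorem isGroupLikeElem_iff [IsDomain k] (hs : IsSweedler k H g x) {y : H} :
    IsGroupLikeElem k y ↔ y = 1 ∨ y = g := by
  refine ⟨fun hy => ?_, ?_⟩
  · obtain ⟨a, b, c, d, rfl⟩ := hs.exists_eq_linearCombination y
    have hε := hy.counit_eq_one
    have hΔ := hy.comul_eq_tmul_self
    rw [hs.counit_linearCombination] at hε
    rw [hs.comul_linearCombination] at hΔ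
    have coeff := fun i j => congrArg (fun z => (hs.basis.tensorProduct hs.basis).repr z (i, j)) hΔ
    have e00 : a = a * a := by
      simpa [Module.Basis.tensorProduct_repr_tmul_apply, add_tmul] using coeff 0 0
    have e20 : c = a * c := by
      simpa [Module.Basis.tensorProduct_repr_tmul_apply, add_tmul] using coeff 2 0
    have e02 : 0 = c * a := by
      simpa [Module.Basis.tensorProduct_repr_tmul_apply, add_tmul] using coeff 0 2
    have e30 : 0 = a * d := by
      simpa [Module.Basis.tensorProduct_repr_tmul_apply, add_tmul] using coeff 3 0
    have e03 : d = d * a := by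
      simpa [Module.Basis.tensorProduct_repr_tmul_apply, add_tmul] using coeff 0 3
    obtain ha | ha : a = 0 ∨ a = 1 := by
      simpa [sub_eq_zero] using mul_eq_zero.mp (by linear_combination -e00 : a * (a - 1) = 0)
    · have hc : c = 0 := by simpa [ha] using e20
      have hd : d = 0 := by simpa [ha] using e03
      have hb : b = 1 := by simpa [ha] using hε
      simp [ha, hb, hc, hd]
    · have hc : c = 0 := by simpa [ha] using e02.symm
      have hd : d = 0 := by simpa [ha] using e30.symm
      have hb : b = 0 := by linear_combination hε - ha
      simp [ha, hb, hc, hd]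
  · rintro (rfl | rfl)
    · exact .one
    · exact ⟨hs.counit_g, hs.comul_g⟩

theorem eq_zero_of_comul_eq (hs : IsSweedler k H g x) {y : H}
    (hy : Coalgebra.comul (R := k) y = y ⊗ₜ[k] (1 : H) + (1 : H) ⊗ₜ[k] y) : y = 0 := by
  obtain ⟨a, b, c, d, rfl⟩ := hs.exists_eq_linearCombination y
  rw [hs.comul_linearCombination] at hy
  have coeff := fun i j => congrArg (fun z => (hs.basis.tensorProduct hs.basis).repr z (i, j)) hy
  have ha : a = 0 := by
    simpa [Module.Basis.tensorProduct_repr_tmul_apply, add_tmul] using coeff 0 0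
  have hb : b = 0 := by
    simpa [Module.Basis.tensorProduct_repr_tmul_apply, add_tmul] using coeff 1 1
  have hc : c = 0 := by
    simpa [Module.Basis.tensorProduct_repr_tmul_apply, add_tmul] using coeff 1 2
  have hd : d = 0 := by
    simpa [Module.Basis.tensorProduct_repr_tmul_apply, add_tmul] using coeff 3 1
  simp [ha, hb, hc, hd]

theorem exists_eq_smul_x_of_comul_eq [IsDomain k] (hs : IsSweedler k H g x) (hchar : (2 : k) ≠ 0)
    {y : H} (hy : Coalgebra.comul (R := k) y = y ⊗ₜ[k] (1 : H) + g ⊗ₜ[k] y) (hyy : y * y = 0) :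
    ∃ β : k, y = β • x := by
  obtain ⟨a, b, c, d, rfl⟩ := hs.exists_eq_linearCombination y
  rw [hs.comul_linearCombination] at hy
  have coeff := fun i j => congrArg (fun z => (hs.basis.tensorProduct hs.basis).repr z (i, j)) hy
  have e10 : 0 = b + a := by
    simpa [Module.Basis.tensorProduct_repr_tmul_apply, add_tmul] using coeff 1 0
  obtain rfl : b = -a := by linear_combination -e10
  obtain rfl : d = 0 := by
    simpa [Module.Basis.tensorProduct_repr_tmul_apply, add_tmul] using (coeff 3 0).symm
  have hsq : a * a + a * a = 0 := by
    simpa [add_mul, mul_add, hs.g_sq, hs.x_sq, hs.x_mul_g] using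
      congrArg (fun z => hs.basis.repr z 0) hyy
  have ha : a = 0 := by simpa [hchar] using (by linear_combination hsq : 2 * (a * a) = 0)
  exact ⟨c, by simp [ha]⟩

variable {u : H →ₗ[k] H}

lemma comul_map_x (hs : IsSweedler k H g x) (hu : IsBialgebraMap k u) :
    Coalgebra.comul (R := k) (u x) = u x ⊗ₜ[k] (1 : H) + u g ⊗ₜ[k] u x := by
  rw [← LinearMap.comp_apply, hu.isCoalgebraMap.2, LinearMap.comp_apply, hs.comul_x]
  simp [hu.map_one]

theorem eq_counit_smul_one_of_map_g_eq_one (hs : IsSweedler k H g x) (hu : IsBialgebraMap k u)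
    (hg : u g = 1) (h : H) : u h = Coalgebra.counit (R := k) h • (1 : H) := by
  have hx : u x = 0 := hs.eq_zero_of_comul_eq (by simpa [hg] using hs.comul_map_x hu)
  have : u = (Coalgebra.counit (R := k) (A := H)).smulRight (1 : H) := hs.basis.ext fun i => by
    fin_cases i <;>
      simp [hu.map_one, hg, hx, hu.map_mul g x, hs.counit_g, hs.counit_x, hs.counit_gx]
  rw [this, LinearMap.smulRight_apply]

theorem exists_map_x_eq_smul_of_map_g_eq_g [IsDomain k] (hs : IsSweedler k H g x)
    (hchar : (2 : k) ≠ 0) (hu : IsBialgebraMap k u) (hg : u g = g) : ∃ β : k, u x = β • x :=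
  hs.exists_eq_smul_x_of_comul_eq hchar (by simpa [hg] using hs.comul_map_x hu)
    (by rw [← hu.map_mul, hs.x_sq, map_zero])

theorem isBialgebraMap_of_map_eq (hs : IsSweedler k H g x) (β : k) (h1 : u 1 = 1) (hg : u g = g)
    (hx : u x = β • x) (hgx : u (g * x) = β • (g * x)) : IsBialgebraMap k u := by
  refine ⟨h1, LinearMap.map_mul_of_basis hs.basis u fun i j => ?_, ?_, ?_⟩
  · fin_cases i <;> fin_cases j <;>
      simp [h1, hg, hx, hgx, hs.g_sq, hs.x_sq, hs.x_mul_g, hs.g_mul_gx, hs.x_mul_gx, hs.gx_mul_g,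
        hs.gx_mul_x, hs.gx_mul_gx]
  · refine hs.basis.ext fun i => ?_
    fin_cases i <;> simp [h1, hg, hx, hgx, hs.counit_g, hs.counit_x, hs.counit_gx]
  · refine hs.basis.ext fun i => ?_
    fin_cases i <;>
      simp [h1, hg, hx, hgx, hs.comul_g, hs.comul_x, hs.comul_gx, Algebra.TensorProduct.one_def,
        tmul_smul, smul_tmul']

end IsSweedler

/-- A linear map `u : H₄ → H₄` is a Hopf algebra morphism (equivalently, a bialgebra
morphism: a unital algebra morphism which is also a coalgebra morphism) if and only if
either `u` is the trivial morphism `u(h) = ε(h)1`, or there exists `β ∈ k` such that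
`u(1) = 1`, `u(g) = g`, `u(x) = βx` and `u(gx) = βgx`. -/
theorem sweedler_hopf_algebra_maps
    {k : Type*} [Field k] (hchar : (2 : k) ≠ 0) {H : Type*} [Ring H] [HopfAlgebra k H]
    {g x : H} (hs : IsSweedler k H g x) (u : H →ₗ[k] H) :
    (u 1 = 1 ∧ (∀ a b : H, u (a * b) = u a * u b) ∧ IsCoalgebraMap k u) ↔
      ((∀ h : H, u h = Coalgebra.counit (R := k) h • (1 : H)) ∨
        ∃ β : k, u 1 = 1 ∧ u g = g ∧ u x = β • x ∧ u (g * x) = β • (g * x)) := by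
  rw [← isBialgebraMap_iff]
  refine ⟨fun hu => ?_, ?_⟩
  · have hg := hu.isCoalgebraMap.isGroupLikeElem_map (hs.isGroupLikeElem_iff.mpr (.inr rfl))
    obtain hg | hg := hs.isGroupLikeElem_iff.mp hg
    · exact .inl (hs.eq_counit_smul_one_of_map_g_eq_one hu hg)
    · obtain ⟨β, hx⟩ := hs.exists_map_x_eq_smul_of_map_g_eq_g hchar hu hg
      exact .inr ⟨β, hu.map_one, hg, hx, by rw [hu.map_mul, hg, hx, mul_smul_comm]⟩
  · rintro (h | ⟨β, h1, hg, hx, hgx⟩)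
    · exact isBialgebraMap_of_eq_counit_smul_one h
    · exact hs.isBialgebraMap_of_map_eq β h1 hg hx hgx

end
end

section
/- Let k be a field of characteristic ≠ 2. The three Hopf algebras H_4 ⊗ H_4, H_{16,0}, and H_{16,1} are pairwise non-isomorphic as Hopf algebras. -/
open TensorProduct

noncomputable section

/-- `E` is (a model of) the Hopf algebra `𝓗_{16, λ}`: it is generated by `g`, `x`, `G`, `X`
subject to the relations `g² = G² = 1`, `x² = X² = 0`, `gx = -xg`, `GX = -XG`, `gG = Gg`,
`gX = -Xg`, `xG = -Gx`, `xX + Xx = λ(1 - Gg)`, the sixteen products of elements of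
`{1, G, X, GX}` with elements of `{1, g, x, gx}` form a basis of `E`, the elements
`g`, `G` are group-like, `x` is `(1, g)`-primitive and `X` is `(1, G)`-primitive. -/
structure IsH16 (k : Type*) [CommRing k] (E : Type*) [Ring E] [HopfAlgebra k E]
    (g x G X : E) (lam : k) : Prop where
  g_sq : g * g = 1
  G_sq : G * G = 1
  x_sq : x * x = 0
  X_sq : X * X = 0
  gx_eq : g * x = -(x * g)
  GX_eq : G * X = -(X * G)
  gG_comm : g * G = G * g
  gX_anticomm : g * X = -(X * g)
  xG_anticomm : x * G = -(G * x)
  xX_rel : x * X + X * x = lam • ((1 : E) - G * g)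
  li : LinearIndependent k
    (fun p : Fin 4 × Fin 4 => ![(1 : E), G, X, G * X] p.1 * ![(1 : E), g, x, g * x] p.2)
  span : Submodule.span k
    (Set.range (fun p : Fin 4 × Fin 4 =>
      ![(1 : E), G, X, G * X] p.1 * ![(1 : E), g, x, g * x] p.2)) = ⊤
  comul_g : Coalgebra.comul (R := k) g = g ⊗ₜ[k] g
  comul_G : Coalgebra.comul (R := k) G = G ⊗ₜ[k] G
  comul_x : Coalgebra.comul (R := k) x = x ⊗ₜ[k] (1 : E) + g ⊗ₜ[k] x
  comul_X : Coalgebra.comul (R := k) X = X ⊗ₜ[k] (1 : E) + G ⊗ₜ[k] X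
  counit_g : Coalgebra.counit (R := k) g = 1
  counit_G : Coalgebra.counit (R := k) G = 1
  counit_x : Coalgebra.counit (R := k) x = 0
  counit_X : Coalgebra.counit (R := k) X = 0

universe u

/-! The three algebras are told apart by their centres. Over a field of characteristic
`≠ 2` the centre of `H₄` is `k`: commuting with `g` kills the `x`-odd part, and commuting with `x`
kills the `g`-component. Hence `H₄ ⊗ H₄` has centre `k`, while `Gg` is a non-scalar central
element of every `𝓗_{16,λ}`. In `𝓗_{16,0}` the six basis elements `1, Gg, Xx, Xgx, GXx, GXgx` are
central; for `λ ≠ 0` the same two commutation conditions leave only a 5-dimensional space. -/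

open Subalgebra

theorem AlgEquiv.finrank_center_eq {R A B : Type*} [CommSemiring R] [Semiring A] [Semiring B]
    [Algebra R A] [Algebra R B] (e : A ≃ₐ[R] B) :
    Module.finrank R (center R A) = Module.finrank R (center R B) := by
  have hmap : (center R A).map (e : A →ₐ[R] B) = center R B := by
    ext y
    refine ⟨?_, fun hy => ⟨e.symm y, ?_, e.apply_symm_apply y⟩⟩
    · rintro ⟨a, ha, rfl⟩
      exact (MulEquivClass.apply_mem_center_iff e).2 ha
    · have hy' : e (e.symm y) ∈ Set.center B := by rw [e.apply_symm_apply]; exact hy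
      exact (MulEquivClass.apply_mem_center_iff e).1 hy'
  rw [← hmap]
  exact (e.subalgebraMap _).toLinearEquiv.finrank_eq

instance Algebra.IsCentral.tensorProduct {K A B : Type*} [Field K] [Ring A] [Ring B]
    [Algebra K A] [Algebra K B] [Algebra.IsCentral K A] [Algebra.IsCentral K B] :
    Algebra.IsCentral K (A ⊗[K] B) where
  out z hz := by
    have hzA := center_le_centralizer (R := K)
      (Algebra.TensorProduct.includeLeft : A →ₐ[K] A ⊗[K] B).range hz
    rw [centralizer_coe_range_includeLeft_eq_center_tensorProduct] at hzA
    obtain ⟨w, hw⟩ := hzA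
    obtain ⟨b, rfl⟩ : ∃ b : B, z = 1 ⊗ₜ b := by
      rw [← hw]
      clear hw
      induction w using TensorProduct.induction_on with
      | zero => exact ⟨0, by simp⟩
      | tmul a b =>
        obtain ⟨c, hc⟩ := (Algebra.IsCentral.mem_center_iff K).1 a.2
        exact ⟨c • b, by simp [hc, Algebra.algebraMap_eq_smul_one, TensorProduct.smul_tmul]⟩
      | add w w' hw hw' =>
        obtain ⟨b, hb⟩ := hw
        obtain ⟨b', hb'⟩ := hw'
        exact ⟨b + b', by rw [map_add, hb, hb', TensorProduct.tmul_add]⟩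
    rcases subsingleton_or_nontrivial A with _ | _
    · exact ⟨0, by simp [Subsingleton.elim (1 : A) 0]⟩
    have hbB : b ∈ center K B := by
      rw [Subalgebra.mem_center_iff]
      intro b'
      apply Algebra.TensorProduct.includeRight_injective (FaithfulSMul.algebraMap_injective K A)
      simpa using (Subalgebra.mem_center_iff.1 hz) (1 ⊗ₜ b')
    obtain ⟨c, rfl⟩ := (Algebra.IsCentral.mem_center_iff K).1 hbB
    exact ⟨c, Algebra.TensorProduct.algebraMap_apply' c⟩

theorem mem_span_left_of_apply_eq_self {K M : Type*} [Field K] [AddCommGroup M] [Module K M]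
    (hchar : (2 : K) ≠ 0) {σ : M →ₗ[K] M} {s t : Set M}
    (hspan : Submodule.span K (s ∪ t) = ⊤) (hs : ∀ v ∈ s, σ v = v) (ht : ∀ v ∈ t, σ v = -v)
    {z : M} (hz : σ z = z) : z ∈ Submodule.span K s := by
  have hz' : z ∈ Submodule.span K s ⊔ Submodule.span K t := by
    rw [← Submodule.span_union, hspan]; trivial
  obtain ⟨u, hu, w, hw, rfl⟩ := Submodule.mem_sup.1 hz'
  have hσu : σ u = u := Submodule.span_le (p := LinearMap.eqLocus σ LinearMap.id) |>.2 hs hu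
  have hσw : σ w = -w := Submodule.span_le (p := LinearMap.eqLocus σ (-LinearMap.id)) |>.2 ht hw
  have hw0 : (2 : K) • w = 0 := by
    rw [map_add, hσu, hσw] at hz
    linear_combination (norm := module) -hz
  rw [(smul_eq_zero.1 hw0).resolve_left hchar, add_zero]
  exact hu

namespace IsSweedler

variable {k : Type*} [Field k] {H : Type*} [Ring H] [HopfAlgebra k H] {g x : H}

theorem mem_span_one_g_of_mul_eq (h : IsSweedler k H g x) (hchar : (2 : k) ≠ 0) {z : H}
    (hz : g * z = z * g) : z ∈ Submodule.span k {1, g} := by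
  refine mem_span_left_of_apply_eq_self hchar (σ := LinearMap.mulLeftRight k (g, g))
    (t := {x, g * x}) ?_ ?_ ?_ ?_
  · rw [← h.span, Set.insert_union, Set.singleton_union]
  · simp [h.g_sq, mul_assoc]
  · simp [h.x_mul_g, mul_assoc, ← mul_assoc g g, h.g_sq]
  · rw [LinearMap.mulLeftRight_apply, hz, mul_assoc, h.g_sq, mul_one]

theorem isCentral (h : IsSweedler k H g x) (hchar : (2 : k) ≠ 0) : Algebra.IsCentral k H where
  out z hz := by
    obtain ⟨a, b, rfl⟩ := Submodule.mem_span_pair.1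
      (h.mem_span_one_g_of_mul_eq hchar (Subalgebra.mem_center_iff.1 hz g))
    have hb : (2 * b) • (g * x) = 0 := by
      have hx := Subalgebra.mem_center_iff.1 hz x
      simp only [mul_add, add_mul, mul_smul_comm, smul_mul_assoc, mul_one, one_mul,
        h.x_mul_g] at hx
      linear_combination (norm := module) -hx
    have hgx : g * x ≠ 0 := h.li.ne_zero 3
    obtain rfl : b = 0 := by simpa [hchar, hgx] using hb
    exact ⟨a, by simp [Algebra.algebraMap_eq_smul_one]⟩

end IsSweedler

namespace IsH16

variable {k : Type*} [Field k] {E : Type*} [Ring E] [HopfAlgebra k E] {g x G X : E} {lam : k}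

theorem X_mul_G (h : IsH16 k E g x G X lam) : X * G = -(G * X) := by
  rw [h.GX_eq, neg_neg]

theorem x_mul_g (h : IsH16 k E g x G X lam) : x * g = -(g * x) := by
  rw [h.gx_eq, neg_neg]

theorem x_mul_X (h : IsH16 k E g x G X lam) : x * X = lam • (1 - G * g) - X * x := by
  rw [← h.xX_rel, add_sub_cancel_right]

/- Rewriting rules bringing products of generators into the order `G, X, g, x` of the basis
monomials; the `_mul` forms act inside right-associated products. -/

theorem G_mul_G_mul (h : IsH16 k E g x G X lam) (t : E) : G * (G * t) = t := by
  rw [← mul_assoc, h.G_sq, one_mul]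

theorem X_mul_G_mul (h : IsH16 k E g x G X lam) (t : E) : X * (G * t) = -(G * (X * t)) := by
  rw [← mul_assoc, h.X_mul_G, neg_mul, mul_assoc]

theorem X_mul_X_mul (h : IsH16 k E g x G X lam) (t : E) : X * (X * t) = 0 := by
  rw [← mul_assoc, h.X_sq, zero_mul]

theorem g_mul_G_mul (h : IsH16 k E g x G X lam) (t : E) : g * (G * t) = G * (g * t) := by
  rw [← mul_assoc, h.gG_comm, mul_assoc]

theorem g_mul_X_mul (h : IsH16 k E g x G X lam) (t : E) : g * (X * t) = -(X * (g * t)) := by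
  rw [← mul_assoc, h.gX_anticomm, neg_mul, mul_assoc]

theorem g_mul_g_mul (h : IsH16 k E g x G X lam) (t : E) : g * (g * t) = t := by
  rw [← mul_assoc, h.g_sq, one_mul]

theorem x_mul_G_mul (h : IsH16 k E g x G X lam) (t : E) : x * (G * t) = -(G * (x * t)) := by
  rw [← mul_assoc, h.xG_anticomm, neg_mul, mul_assoc]

theorem x_mul_X_mul (h : IsH16 k E g x G X lam) (t : E) :
    x * (X * t) = lam • (t - G * (g * t)) - X * (x * t) := by
  rw [← mul_assoc, h.x_mul_X, sub_mul, smul_mul_assoc, sub_mul, one_mul, mul_assoc, mul_assoc]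

theorem x_mul_g_mul (h : IsH16 k E g x G X lam) (t : E) : x * (g * t) = -(g * (x * t)) := by
  rw [← mul_assoc, h.x_mul_g, neg_mul, mul_assoc]

theorem module_finite (h : IsH16 k E g x G X lam) : Module.Finite k E :=
  ⟨h.span ▸ Submodule.fg_span (Set.finite_range _)⟩

theorem mem_center_of_commute (h : IsH16 k E g x G X lam) {z : E} (hg : g * z = z * g)
    (hG : G * z = z * G) (hx : x * z = z * x) (hX : X * z = z * X) : z ∈ center k E := by
  have hgen : ∀ y ∈ ({g, G, x, X} : Set E), y ∈ centralizer k {z} := by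
    simp only [Set.mem_insert_iff, Set.mem_singleton_iff, Subalgebra.mem_centralizer_iff,
      forall_eq_or_imp, forall_eq]
    exact ⟨hg.symm, hG.symm, hx.symm, hX.symm⟩
  have hspan : Submodule.span k (Set.range (fun p : Fin 4 × Fin 4 =>
      ![(1 : E), G, X, G * X] p.1 * ![(1 : E), g, x, g * x] p.2)) ≤
      Subalgebra.toSubmodule (centralizer k {z}) := by
    rw [Submodule.span_le]
    rintro _ ⟨⟨i, j⟩, rfl⟩
    refine (Subalgebra.mem_toSubmodule _).2 (mul_mem ?_ ?_)
    · fin_cases i <;> simp [one_mem, mul_mem, hgen]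
    · fin_cases j <;> simp [one_mem, mul_mem, hgen]
  rw [h.span] at hspan
  exact Subalgebra.mem_center_iff.2 fun y =>
    ((Subalgebra.mem_centralizer_iff k).1 (hspan (Submodule.mem_top (x := y))) z rfl).symm

theorem linearIndependent_of_comp (h : IsH16 k E g x G X lam) {n : ℕ}
    {f : Fin n → Fin 4 × Fin 4} (hf : f.Injective) {m : Fin n → E}
    (hm : ∀ i, ![(1 : E), G, X, G * X] (f i).1 * ![(1 : E), g, x, g * x] (f i).2 = m i) :
    LinearIndependent k m :=
  funext hm ▸ h.li.comp f hf

theorem G_mul_g_mem_center (h : IsH16 k E g x G X lam) : G * g ∈ center k E := by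
  apply h.mem_center_of_commute <;>
    simp only [mul_assoc, h.g_mul_G_mul, h.g_sq, h.G_mul_G_mul, h.gG_comm, h.x_mul_G_mul,
      h.x_mul_g, h.X_mul_G_mul, h.gX_anticomm, neg_neg, mul_neg, mul_one]

theorem not_isCentral (h : IsH16 k E g x G X lam) : ¬ Algebra.IsCentral k E := by
  intro hcentral
  obtain ⟨c, hc⟩ := (Algebra.IsCentral.mem_center_iff k).1 h.G_mul_g_mem_center
  have hli : LinearIndependent k ![(1 : E), G * g] :=
    h.linearIndependent_of_comp (f := ![(0, 0), (1, 1)]) (by decide)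
      (by intro i; fin_cases i <;> simp)
  have := LinearIndependent.pair_iff.1 hli (-c) 1
    (by rw [hc, Algebra.algebraMap_eq_smul_one]; module)
  exact one_ne_zero this.2

theorem six_le_finrank_center (h : IsH16 k E g x G X 0) :
    6 ≤ Module.finrank k (center k E) := by
  have := h.module_finite
  set m : Fin 6 → E := ![1, G * g, X * x, X * (g * x), G * X * x, G * X * (g * x)]
  have hli : LinearIndependent k m :=
    h.linearIndependent_of_comp (f := ![(0, 0), (1, 1), (2, 2), (2, 3), (3, 2), (3, 3)])
      (by decide) (by intro i; fin_cases i <;> simp [m])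
  have hGg := h.G_mul_g_mem_center
  obtain ⟨hXx, hXgx⟩ : X * x ∈ center k E ∧ X * (g * x) ∈ center k E := by
    constructor <;> apply h.mem_center_of_commute <;>
      simp [mul_assoc, h.x_sq, h.x_mul_X, h.x_mul_g, h.xG_anticomm, h.g_mul_G_mul,
        h.g_mul_X_mul, h.g_mul_g_mul, h.X_mul_G_mul, h.X_mul_X_mul, h.x_mul_g_mul, h.x_mul_X_mul]
  have hm : ∀ i, m i ∈ center k E := by
    intro i
    fin_cases i
    · exact one_mem _
    · exact hGg
    · exact hXx
    · exact hXgx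
    · have : G * X * x = -(G * g * (X * (g * x))) := by
        simp only [mul_assoc, h.g_mul_X_mul, h.g_mul_g_mul, mul_neg, neg_neg]
      simpa [m, this] using neg_mem (mul_mem hGg hXgx)
    · have : G * X * (g * x) = -(G * g * (X * x)) := by
        simp only [mul_assoc, h.g_mul_X_mul, mul_neg, neg_neg]
      simpa [m, this] using neg_mem (mul_mem hGg hXx)
  calc 6 = Module.finrank k (Submodule.span k (Set.range m)) := by
        rw [finrank_span_eq_card hli, Fintype.card_fin]
    _ ≤ Module.finrank k (Subalgebra.toSubmodule (center k E)) :=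
        Submodule.finrank_mono (Submodule.span_le.2 (Set.range_subset_iff.2 hm))
    _ = Module.finrank k (center k E) := Subalgebra.finrank_toSubmodule _

theorem mem_span_even_of_mul_eq (h : IsH16 k E g x G X lam) (hchar : (2 : k) ≠ 0) {z : E}
    (hz : g * z = z * g) :
    z ∈ Submodule.span k
      (Set.range ![1, g, G, G * g, X * x, X * (g * x), G * X * x, G * X * (g * x)]) := by
  simp only [Matrix.range_cons, Matrix.range_empty, Set.union_empty, Set.singleton_union]
  refine mem_span_left_of_apply_eq_self hchar (σ := LinearMap.mulLeftRight k (g, g))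
    (t := {x, g * x, G * x, G * (g * x), X, X * g, G * X, G * X * g}) ?_ ?_ ?_
    (by rw [LinearMap.mulLeftRight_apply, hz, mul_assoc, h.g_sq, mul_one])
  · rw [eq_top_iff, ← h.span]
    refine Submodule.span_mono ?_
    rintro _ ⟨⟨i, j⟩, rfl⟩
    fin_cases i <;> fin_cases j <;>
      simp only [Fin.zero_eta, Fin.mk_one, Fin.reduceFinMk, Matrix.cons_val, one_mul, mul_one,
        Set.mem_union, Set.mem_insert_iff, Set.mem_singleton_iff, true_or, or_true]
  all_goals
    simp only [Set.mem_insert_iff, Set.mem_singleton_iff, forall_eq_or_imp, forall_eq,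
      LinearMap.mulLeftRight_apply]
    simp [mul_assoc, h.g_sq, h.gG_comm, h.gX_anticomm, h.x_mul_g, h.g_mul_G_mul, h.g_mul_X_mul,
      h.g_mul_g_mul]

theorem center_le_span (h : IsH16 k E g x G X lam) (hchar : (2 : k) ≠ 0) (hlam : lam ≠ 0) :
    Subalgebra.toSubmodule (center k E) ≤ Submodule.span k (Set.range
      ![1, G * g, X * x - G * X * (g * x), X * (g * x) + (lam / 2) • (g - G),
        G * X * x + (lam / 2) • (g - G)]) := by
  intro z hz
  obtain ⟨c, rfl⟩ := (Submodule.mem_span_range_iff_exists_fun k).1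
    (h.mem_span_even_of_mul_eq hchar ((Subalgebra.mem_center_iff (R := k)).1 hz g))
  have hcomm : (lam * (c 4 + c 7)) • x + (lam * (c 5 + c 6) - 2 * c 1) • (g * x) +
      (-(2 * c 2) - lam * (c 5 + c 6)) • (G * x) + (-(lam * (c 4 + c 7))) • (G * (g * x)) = 0 := by
    have hx := (Subalgebra.mem_center_iff (R := k)).1 hz x
    simp only [Fin.sum_univ_eight, Matrix.cons_val, mul_add, add_mul, mul_smul_comm,
      smul_mul_assoc, mul_one, one_mul, mul_assoc, h.x_sq, h.x_mul_g, h.xG_anticomm,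
      h.g_mul_g_mul, h.G_mul_G_mul, h.x_mul_G_mul, h.x_mul_X_mul, h.x_mul_g_mul, mul_neg,
      mul_zero, neg_zero, smul_neg, mul_sub] at hx
    linear_combination (norm := module) hx
  have hli : LinearIndependent k ![x, g * x, G * x, G * (g * x)] :=
    h.linearIndependent_of_comp (f := ![(0, 2), (0, 3), (1, 2), (1, 3)]) (by decide)
      (by intro i; fin_cases i <;> simp)
  have hcoeff := Fintype.linearIndependent_iff.1 hli ![lam * (c 4 + c 7),
    lam * (c 5 + c 6) - 2 * c 1, -(2 * c 2) - lam * (c 5 + c 6), -(lam * (c 4 + c 7))]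
    (by simpa [Fin.sum_univ_four] using hcomm)
  have e0 : lam * (c 4 + c 7) = 0 := hcoeff 0
  have e1 : lam * (c 5 + c 6) - 2 * c 1 = 0 := hcoeff 1
  have e2 : -(2 * c 2) - lam * (c 5 + c 6) = 0 := hcoeff 2
  have h7 : c 7 = -c 4 := by linear_combination (mul_eq_zero.1 e0).resolve_left hlam
  have h1 : c 1 = lam / 2 * (c 5 + c 6) := by field_simp; linear_combination -e1
  have h2 : c 2 = -c 1 := by
    have h12 : 2 * (c 1 + c 2) = 0 := by linear_combination -e1 - e2
    linear_combination (mul_eq_zero.1 h12).resolve_left hchar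
  refine (Submodule.mem_span_range_iff_exists_fun k).2 ⟨![c 0, c 3, c 4, c 5, c 6], ?_⟩
  simp only [Fin.sum_univ_eight, Fin.sum_univ_five, Matrix.cons_val]
  rw [h7, h2, h1]
  module

theorem finrank_center_le_five (h : IsH16 k E g x G X lam) (hchar : (2 : k) ≠ 0)
    (hlam : lam ≠ 0) : Module.finrank k (center k E) ≤ 5 := by
  have := h.module_finite
  calc Module.finrank k (center k E)
      = Module.finrank k (Subalgebra.toSubmodule (center k E)) :=
        (Subalgebra.finrank_toSubmodule _).symm
    _ ≤ Module.finrank k (Submodule.span k _) :=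
        Submodule.finrank_mono (h.center_le_span hchar hlam)
    _ ≤ 5 := finrank_range_le_card _

end IsH16

/-- Over a field `k` of characteristic `≠ 2`, the three Hopf algebras `H₄ ⊗ H₄`,
`𝓗_{16, 0}` and `𝓗_{16, 1}` are pairwise non-isomorphic. -/
theorem tensor_h16zero_h16one_pairwise_nonisomorphic
    {k : Type u} [Field k] (hchar : (2 : k) ≠ 0)
    {A : Type u} [Ring A] [HopfAlgebra k A] {gA xA : A} (hA : IsSweedler k A gA xA)
    {B : Type u} [Ring B] [HopfAlgebra k B] {gB xB : B} (hB : IsSweedler k B gB xB)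
    {E₀ : Type u} [Ring E₀] [HopfAlgebra k E₀] {g₀ x₀ G₀ X₀ : E₀}
    (hE₀ : IsH16 k E₀ g₀ x₀ G₀ X₀ 0)
    {E₁ : Type u} [Ring E₁] [HopfAlgebra k E₁] {g₁ x₁ G₁ X₁ : E₁}
    (hE₁ : IsH16 k E₁ g₁ x₁ G₁ X₁ 1) :
    ¬ Nonempty ((A ⊗[k] B) ≃ₐc[k] E₀) ∧
    ¬ Nonempty ((A ⊗[k] B) ≃ₐc[k] E₁) ∧
    ¬ Nonempty (E₀ ≃ₐc[k] E₁) := by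
  have := hA.isCentral hchar
  have := hB.isCentral hchar
  refine ⟨fun ⟨e⟩ => hE₀.not_isCentral (.of_algEquiv k _ _ e.toAlgEquiv),
    fun ⟨e⟩ => hE₁.not_isCentral (.of_algEquiv k _ _ e.toAlgEquiv), fun ⟨e⟩ => ?_⟩
  have h₀ := e.toAlgEquiv.finrank_center_eq ▸ hE₀.six_le_finrank_center
  have h₁ := hE₁.finrank_center_le_five hchar one_ne_zero
  omega

end
end
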